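/- The same polynomial $\mathcal{M}_{(3/2)} = \frac{q(1-t)}{1-qt}p_1\pi_1 + \frac{1-q}{1-qt}\pi_2$ is an eigenvector with eigenvalue $q^2-1$ of the operator $\overline{\mathcal{D}}_2 := (q-1)p_1\partial_{p_1} + (q-1)\big(1+(q-1)(1-t^{-1})p_1\partial_{p_1}\big)\pi_1\partial_{\pi_1} + q(q-1)(1-t^{-1})p_1\pi_1\partial_{\pi_2} + t^{-1}(q-1)^2\partial_{p_1}\pi_2\partial_{\pi_1} + \tfrac12\big((q^2-1)(1+t^{-1}) - (1-q)^2(1-t^{-1})\big)\pi_2\partial_{\pi_2}$. -/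

import Mathlib

/-!
Every term of `𝒟̄₂` maps the span of `p₁π₁` and `π₂` into itself: `∂_{π_k}` strips the single
fermion and `π_ℓ` puts one back, while `∂_{p₁}` kills constants. So `𝒟̄₂` acts there by a `2 × 2`
matrix over `K`, and the eigenvector equation for `𝓜_{(3/2)}` reduces to two rational identities
in `q` and `t`.
-/

noncomputable section

variable {K : Type} [Field K] [CharZero K]

/-- The super-polynomial ring `K[p₁,p₂,…] ⊗ Λ[π₁,π₂,…]`, modelled by finitely supported
functions assigning to each finite set `T` of fermionic indices (the wedge monomial
`π_{t₁} ∧ ⋯ ∧ π_{t_m}`, indices increasing) a bosonic coefficient. -/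
abbrev SP (K : Type) [Field K] := Finset ℕ →₀ MvPolynomial ℕ K

/-- Multiplication by a bosonic element `f`, acting coefficientwise. -/
def fmul (f : MvPolynomial ℕ K) (v : SP K) : SP K :=
  v.sum fun T r => Finsupp.single T (f * r)

/-- A bosonic operator `A` (e.g. a differential operator in the `p`'s) acting
coefficientwise. -/
def fop (A : MvPolynomial ℕ K → MvPolynomial ℕ K) (v : SP K) : SP K :=
  v.sum fun T r => Finsupp.single T (A r)

/-- Left multiplication by the fermionic generator `π_k`:
`π_k · e_T = (-1)^{#{s∈T : s<k}} e_{T∪{k}}` for `k ∉ T`, and `0` otherwise. -/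
def fermi (k : ℕ) (v : SP K) : SP K :=
  v.sum fun T r =>
    if k ∈ T then 0
    else Finsupp.single (insert k T)
      ((-1 : MvPolynomial ℕ K) ^ ((T.filter fun j => j < k).card) * r)

/-- The odd derivation `∂_{π_k}` with `{∂_{π_k}, π_ℓ} = δ_{kℓ}`:
`∂_{π_k} e_T = (-1)^{#{s∈T : s<k}} e_{T\{k}}` for `k ∈ T`, and `0` otherwise. -/
def dfermi (k : ℕ) (v : SP K) : SP K :=
  v.sum fun T r =>
    if k ∈ T then
      Finsupp.single (T.erase k)
        ((-1 : MvPolynomial ℕ K) ^ ((T.filter fun j => j < k).card) * r)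
    else 0

end

noncomputable section

open MvPolynomial

variable {K : Type} [Field K] [CharZero K]

/-- The level-`3/2` super Macdonald polynomial
`𝓜_{(3/2)} = q(1-t)/(1-qt) · p₁π₁ + (1-q)/(1-qt) · π₂`. -/
def M32 (q t : K) : SP K :=
  Finsupp.single {1} (C (q * (1 - t) / (1 - q * t)) * X 1) +
    Finsupp.single {2} (C ((1 - q) / (1 - q * t)))

/-- The operator `𝒟̄₂ = (q-1) p₁∂_{p₁} + (q-1)(1 + (q-1)(1-t⁻¹) p₁∂_{p₁}) π₁∂_{π₁}
+ q(q-1)(1-t⁻¹) p₁ π₁ ∂_{π₂} + t⁻¹(q-1)² ∂_{p₁} π₂ ∂_{π₁}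
+ ½((q²-1)(1+t⁻¹) - (1-q)²(1-t⁻¹)) π₂ ∂_{π₂}`. -/
def D2barOp (q t : K) (v : SP K) : SP K :=
  fmul (C (q - 1) * X 1) (fop (pderiv 1) v) +
    (fmul (C (q - 1)) (fermi 1 (dfermi 1 v)) +
      fmul (C ((q - 1) * ((q - 1) * (1 - t⁻¹))) * X 1)
        (fop (pderiv 1) (fermi 1 (dfermi 1 v)))) +
    fmul (C (q * (q - 1) * (1 - t⁻¹)) * X 1) (fermi 1 (dfermi 2 v)) +
    fmul (C (t⁻¹ * (q - 1) ^ 2)) (fop (pderiv 1) (fermi 2 (dfermi 1 v))) +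
    fmul (C (((q ^ 2 - 1) * (1 + t⁻¹) - (1 - q) ^ 2 * (1 - t⁻¹)) / 2))
      (fermi 2 (dfermi 2 v))

end

section

open MvPolynomial Finsupp

variable {K : Type} [Field K]

@[simp]
lemma fmul_single (f : MvPolynomial ℕ K) (T : Finset ℕ) (r : MvPolynomial ℕ K) :
    fmul f (single T r) = single T (f * r) := by
  simp [fmul]

@[simp]
lemma fmul_add (f : MvPolynomial ℕ K) (u v : SP K) :
    fmul f (u + v) = fmul f u + fmul f v :=
  sum_add_index' (by simp) fun _ _ _ => by simp [mul_add]

section fop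

variable {F : Type*} [FunLike F (MvPolynomial ℕ K) (MvPolynomial ℕ K)]
  [AddMonoidHomClass F (MvPolynomial ℕ K) (MvPolynomial ℕ K)] (A : F)

@[simp]
lemma fop_single (T : Finset ℕ) (r : MvPolynomial ℕ K) :
    fop A (single T r) = single T (A r) := by
  simp [fop]

@[simp]
lemma fop_add (u v : SP K) : fop A (u + v) = fop A u + fop A v :=
  sum_add_index' (by simp) fun _ _ _ => by simp

end fop

lemma fermi_single (k : ℕ) (T : Finset ℕ) (r : MvPolynomial ℕ K) :
    fermi k (single T r) =
      if k ∈ T then 0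
      else single (insert k T) ((-1 : MvPolynomial ℕ K) ^ (T.filter (· < k)).card * r) := by
  rw [fermi, sum_single_index]
  split_ifs <;> simp

@[simp]
lemma fermi_single_empty (k : ℕ) (r : MvPolynomial ℕ K) :
    fermi k (single ∅ r) = single {k} r := by
  simp [fermi_single]

lemma dfermi_single (k : ℕ) (T : Finset ℕ) (r : MvPolynomial ℕ K) :
    dfermi k (single T r) =
      if k ∈ T then single (T.erase k) ((-1 : MvPolynomial ℕ K) ^ (T.filter (· < k)).card * r)
      else 0 := by
  rw [dfermi, sum_single_index]
  split_ifs <;> simp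

@[simp]
lemma dfermi_add (k : ℕ) (u v : SP K) : dfermi k (u + v) = dfermi k u + dfermi k v :=
  sum_add_index' (fun _ => by split_ifs <;> simp)
    fun _ _ _ => by split_ifs <;> simp [mul_add]

@[simp]
lemma dfermi_single_singleton (k : ℕ) (r : MvPolynomial ℕ K) :
    dfermi k (single {k} r) = single ∅ r := by
  rw [dfermi_single, if_pos (Finset.mem_singleton_self k), Finset.erase_singleton,
    Finset.filter_singleton, if_neg (lt_irrefl k), Finset.card_empty, pow_zero, one_mul]

lemma dfermi_single_singleton_of_ne {j k : ℕ} (h : j ≠ k) (r : MvPolynomial ℕ K) :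
    dfermi k (single {j} r) = 0 := by
  simp [dfermi_single, Ne.symm h]

lemma D2barOp_single_add_single (q t a b : K) :
    D2barOp q t (single {1} (C a * X 1) + single {2} (C b)) =
      single {1} (C ((q - 1) * a + (q - 1) * a + (q - 1) * ((q - 1) * (1 - t⁻¹)) * a
          + q * (q - 1) * (1 - t⁻¹) * b) * X 1) +
        single {2} (C (t⁻¹ * (q - 1) ^ 2 * a
          + ((q ^ 2 - 1) * (1 + t⁻¹) - (1 - q) ^ 2 * (1 - t⁻¹)) / 2 * b)) := by
  simp only [D2barOp, fop_add, dfermi_add, dfermi_single_singleton,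
    dfermi_single_singleton_of_ne (show (1 : ℕ) ≠ 2 by decide),
    dfermi_single_singleton_of_ne (show (2 : ℕ) ≠ 1 by decide), fermi_single_empty, fop_single,
    fmul_single, pderiv_C_mul, pderiv_X_self, pderiv_C, mul_one, single_zero, add_zero,
    zero_add, ← single_add, add_assoc]
  congr 2
  · simp only [map_add, map_mul]
    ring
  · simp only [map_add, map_mul]

end

noncomputable section

open MvPolynomial

variable {K : Type} [Field K] [CharZero K]

theorem D2bar_eigen_M32_general (q t : K) (ht : t ≠ 0) (hqt : q * t ≠ 1) :
    D2barOp q t (M32 q t) = fmul (C ((q : K) ^ 2 - 1)) (M32 q t) := by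
  have h1qt : 1 - q * t ≠ 0 := sub_ne_zero.mpr hqt.symm
  simp only [M32, D2barOp_single_add_single, fmul_add, fmul_single, ← mul_assoc, ← C_mul]
  congr 1
  · congr 3
    field_simp
    ring
  · congr 2
    field_simp
    ring

/-- `𝓜_{(3/2)}` is an eigenvector of `𝒟̄₂` with eigenvalue `q² - 1`. -/
theorem D2bar_eigen_M32 (q t : K) (hq : q ≠ 0) (ht : t ≠ 0) (hqt : q * t ≠ 1) :
    D2barOp q t (M32 q t) = fmul (C ((q : K) ^ 2 - 1)) (M32 q t) :=
  D2bar_eigen_M32_general q t ht hqt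

end
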